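/- arXiv:1502.06222 — 2 statements merged into one kernel-verified Lean document; each statement's English description precedes it below -/
import Mathlib

section
/- Let A be an n×n max-plus matrix with Tr(A) := max over k=1..n of tr(A^k) strictly greater than 0. Then the inequality A ⊗ x ≤ x has no regular (all-finite) solution x ∈ ℝ^n. -/
open Finset

abbrev MP := WithBot ℝ

/-- Max-plus matrix multiplication. -/
def mpMul {l m n : ℕ} (A : Fin l → Fin m → MP) (B : Fin m → Fin n → MP) :
    Fin l → Fin n → MP :=
  fun i j => Finset.univ.sup fun k => A i k + B k j

/-- Max-plus matrix-vector product: (A ⊗ v)ᵢ = max_j (aᵢⱼ + vⱼ). -/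
def mpMulVec {m n : ℕ} (A : Fin m → Fin n → MP) (v : Fin n → MP) : Fin m → MP :=
  fun i => Finset.univ.sup fun j => A i j + v j

/-- The max-plus identity matrix. -/
def mpId (n : ℕ) : Fin n → Fin n → MP := fun i j => if i = j then (0 : MP) else ⊥

/-- Max-plus matrix power. -/
def mpPow {n : ℕ} (A : Fin n → Fin n → MP) : ℕ → (Fin n → Fin n → MP)
  | 0 => mpId n
  | k + 1 => mpMul (mpPow A k) A

/-- Max-plus trace. -/
def mptr {n : ℕ} (A : Fin n → Fin n → MP) : MP := Finset.univ.sup fun i => A i i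

/-- Kleene star: A* = I ⊕ A ⊕ ⋯ ⊕ A^{n-1}. -/
def mpStar {n : ℕ} (A : Fin n → Fin n → MP) : Fin n → Fin n → MP :=
  (Finset.range n).sup fun k => mpPow A k


lemma sup_add_eq {m : ℕ} (f : Fin m → MP) (c : MP) :
    (Finset.univ.sup f) + c = Finset.univ.sup (fun j => f j + c) := by
  refine Finset.comp_sup_eq_sup_comp (· + c) ?_ ?_
  · intro a b
    rcases le_total a b with h | h
    · simp [max_eq_right h, max_eq_right (add_le_add_left h c)]
    · simp [max_eq_left h, max_eq_left (add_le_add_left h c)]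
  · simp

lemma pow_entry_le {n : ℕ} (A : Fin n → Fin n → MP) (x : Fin n → ℝ)
    (hx : ∀ i, mpMulVec A (fun j => ((x j : ℝ) : MP)) i ≤ ((x i : ℝ) : MP)) :
    ∀ k i j, (mpPow A k) i j + ((x j : ℝ) : MP) ≤ ((x i : ℝ) : MP) := by
  intro k
  induction k with
  | zero =>
    intro i j
    by_cases h : i = j
    · subst h; simp [mpPow, mpId]
    · simp [mpPow, mpId, h]
  | succ k ih =>
    intro i j
    have heq : (mpPow A (k+1)) i j + ((x j : ℝ) : MP)
        = Finset.univ.sup (fun l => (mpPow A k) i l + A l j + ((x j : ℝ) : MP)) := by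
      simp [mpPow, mpMul, sup_add_eq]
    rw [heq]
    apply Finset.sup_le
    intro l _
    have h1 : A l j + ((x j : ℝ) : MP) ≤ ((x l : ℝ) : MP) :=
      le_trans (Finset.le_sup (f := fun j' => A l j' + ((x j' : ℝ) : MP))
        (Finset.mem_univ j)) (hx l)
    calc (mpPow A k) i l + A l j + ((x j : ℝ) : MP)
        = (mpPow A k) i l + (A l j + ((x j : ℝ) : MP)) := by rw [add_assoc]
      _ ≤ (mpPow A k) i l + ((x l : ℝ) : MP) := add_le_add_right h1 _
      _ ≤ ((x i : ℝ) : MP) := ih i l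

/-- If Tr(A) = max over k = 1..n of tr(Aᵏ) is strictly greater than 0, then
A ⊗ x ≤ x has no regular solution. -/
theorem maxplus_Ax_le_x_no_solution {n : ℕ} (A : Fin n → Fin n → MP)
    (hA : (0 : MP) < (Finset.Icc 1 n).sup fun k => mptr (mpPow A k)) :
    ¬ ∃ x : Fin n → ℝ,
        ∀ i, mpMulVec A (fun j => ((x j : ℝ) : MP)) i ≤ ((x i : ℝ) : MP) := by
  -- proof
  rintro ⟨x, hx⟩
  obtain ⟨k, hk, hk0⟩ := Finset.lt_sup_iff.mp hA
  rw [mptr] at hk0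
  obtain ⟨i, -, hi⟩ := Finset.lt_sup_iff.mp hk0
  obtain ⟨r, hb, hr⟩ := WithBot.lt_iff_exists_coe.mp hi
  have hr0 : (0 : ℝ) < r := by exact_mod_cast hr
  have hle := pow_entry_le A x hx k i i
  rw [hb] at hle
  have : r + x i ≤ x i := by exact_mod_cast hle
  linarith
end

section
/- Let A be a row-regular and B a column-regular m×n max-plus matrix, p ∈ (ℝ ∪ {-∞})^m a nonzero vector and q ∈ ℝ^m a regular vector. Then the minimum over regular x ∈ ℝ^n of q^- ⊗ B ⊗ x ⊗ (A ⊗ x)^- ⊗ p, i.e., of max_i((Bx)_i − q_i) + max_i(p_i − (Ax)_i), equals Δ = (A ⊗ (q^- ⊗ B)^-)^- ⊗ p = max_i ( p_i − max_j ( a_{ij} + min_k(q_k − b_{kj}) ) ), and is attained at every vector x = α ⊗ (q^- ⊗ B)^- with α ∈ ℝ. -/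
open Finset

/-- Negation (max-plus multiplicative inverse), fixing -∞. -/
def mneg : MP → MP := WithBot.map Neg.neg

/-- The vector (q⁻ ⊗ B)⁻, with entries min_k (qₖ - bₖⱼ). -/
def cvec {m n : ℕ} (B : Fin m → Fin n → MP) (q : Fin m → ℝ) : Fin n → MP :=
  fun j => mneg (Finset.univ.sup fun i => ((-q i : ℝ) : MP) + B i j)

/-- The objective q⁻ ⊗ B ⊗ x ⊗ (A ⊗ x)⁻ ⊗ p. -/
def obj {m n : ℕ} (A B : Fin m → Fin n → MP) (p : Fin m → MP) (q : Fin m → ℝ)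
    (x : Fin n → MP) : MP :=
  (Finset.univ.sup fun i => mpMulVec B x i + ((-q i : ℝ) : MP)) +
    (Finset.univ.sup fun i => mneg (mpMulVec A x i) + p i)

lemma mneg_coe (r : ℝ) : mneg (r : MP) = ((-r : ℝ) : MP) := rfl

lemma botOrCoe (a : MP) : a = ⊥ ∨ ∃ r : ℝ, a = ((r : ℝ) : MP) := by
  induction a using WithBot.recBotCoe with
  | bot => exact Or.inl rfl
  | coe a => exact Or.inr ⟨a, rfl⟩

lemma neBotCoe (a : MP) (h : a ≠ ⊥) : ∃ r : ℝ, a = ((r : ℝ) : MP) := by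
  rcases botOrCoe a with h' | h'
  · exact absurd h' h
  · exact h'

lemma supNeBot {ι : Type*} (s : Finset ι) (f : ι → MP) {i : ι} (hi : i ∈ s)
    (h : f i ≠ ⊥) : s.sup f ≠ ⊥ := by
  intro hs
  exact h (le_bot_iff.mp (hs ▸ Finset.le_sup (f := f) hi))

lemma coe_add_max (r : ℝ) (a b : MP) :
    (r : MP) + (a ⊔ b) = ((r : MP) + a) ⊔ ((r : MP) + b) := by
  induction a using WithBot.recBotCoe with
  | bot => simp
  | coe a =>
    induction b using WithBot.recBotCoe with
    | bot => simp
    | coe b =>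
      rw [← WithBot.coe_sup, ← WithBot.coe_add, ← WithBot.coe_add, ← WithBot.coe_add,
        ← WithBot.coe_sup, add_sup]

lemma coe_add_sup (r : ℝ) {ι : Type*} (s : Finset ι) (f : ι → MP) :
    (r : MP) + s.sup f = s.sup fun i => (r : MP) + f i := by
  induction s using Finset.cons_induction with
  | empty => simp
  | cons a s ha ih => rw [Finset.sup_cons, Finset.sup_cons, coe_add_max, ih]

/-- For A row-regular, B column-regular, p nonzero and q regular, the minimum
over regular x of q⁻ ⊗ B ⊗ x ⊗ (A ⊗ x)⁻ ⊗ p equals Δ = (A ⊗ (q⁻ ⊗ B)⁻)⁻ ⊗ p,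
attained at every x = α ⊗ (q⁻ ⊗ B)⁻ with α ∈ ℝ. -/
theorem maxplus_min_span {m n : ℕ} (A B : Fin m → Fin n → MP)
    (hA : ∀ i, ∃ j, A i j ≠ ⊥) (hB : ∀ j, ∃ i, B i j ≠ ⊥)
    (p : Fin m → MP) (hp : ∃ i, p i ≠ ⊥) (q : Fin m → ℝ) :
    (∀ x : Fin n → ℝ,
      (Finset.univ.sup fun i => mneg (mpMulVec A (cvec B q) i) + p i) ≤
        obj A B p q fun j => ((x j : ℝ) : MP)) ∧
    (∀ α : ℝ, obj A B p q (fun j => ((α : ℝ) : MP) + cvec B q j) =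
      Finset.univ.sup fun i => mneg (mpMulVec A (cvec B q) i) + p i) := by
  obtain ⟨i0, hp0⟩ := hp
  haveI hm : Nonempty (Fin m) := ⟨i0⟩
  obtain ⟨j0, hj0⟩ := hA i0
  -- each column sup is a real number
  have hc : ∀ j, ∃ cj : ℝ,
      (Finset.univ.sup fun i => ((-q i : ℝ) : MP) + B i j) = ((cj : ℝ) : MP) := by
    intro j
    obtain ⟨i, hi⟩ := hB j
    refine neBotCoe _ (supNeBot _ _ (Finset.mem_univ i) ?_)
    intro h
    rcases WithBot.add_eq_bot.mp h with h | h
    · exact WithBot.coe_ne_bot h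
    · exact hi h
  choose S hS using hc
  have hcvec : ∀ j, cvec B q j = ((-(S j) : ℝ) : MP) := by
    intro j
    rw [cvec, hS j, mneg_coe]
  -- K1 : B i j + c j ≤ q i
  have K1 : ∀ i j, B i j + cvec B q j ≤ ((q i : ℝ) : MP) := by
    intro i j
    have hle : ((-q i : ℝ) : MP) + B i j ≤ ((S j : ℝ) : MP) := by
      rw [← hS j]
      exact Finset.le_sup (f := fun i' => ((-q i' : ℝ) : MP) + B i' j) (Finset.mem_univ i)
    rw [hcvec j]
    rcases botOrCoe (B i j) with hb | ⟨b, hb⟩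
    · rw [hb]; simp
    · rw [hb] at hle ⊢
      rw [← WithBot.coe_add] at hle ⊢
      have := WithBot.coe_le_coe.mp hle
      exact WithBot.coe_le_coe.mpr (by linarith)
  -- K2 : the bound is attained
  have K2 : ∀ j, ∃ i, B i j + cvec B q j = ((q i : ℝ) : MP) := by
    intro j
    obtain ⟨i, -, hi⟩ := Finset.exists_mem_eq_sup Finset.univ Finset.univ_nonempty
      (fun i => ((-q i : ℝ) : MP) + B i j)
    rw [hS j] at hi
    refine ⟨i, ?_⟩
    rcases botOrCoe (B i j) with hb | ⟨b, hb⟩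
    · rw [hb] at hi; simp at hi
    · rw [hb] at hi
      rw [← WithBot.coe_add] at hi
      have h7 := WithBot.coe_eq_coe.mp hi
      rw [hb, hcvec j, ← WithBot.coe_add]
      exact WithBot.coe_eq_coe.mpr (by linarith)
  -- A ⊗ c is a real vector
  have hdx : ∀ i, ∃ di : ℝ, mpMulVec A (cvec B q) i = ((di : ℝ) : MP) := by
    intro i
    obtain ⟨j, hj⟩ := hA i
    refine neBotCoe _ (supNeBot _ _ (Finset.mem_univ j) ?_)
    intro h
    rcases WithBot.add_eq_bot.mp h with h | h
    · exact hj h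
    · rw [hcvec j] at h; exact WithBot.coe_ne_bot h
  choose d hd using hdx
  have hDel2 : (Finset.univ.sup fun i => mneg (mpMulVec A (cvec B q) i) + p i) =
      Finset.univ.sup fun i => ((-(d i) : ℝ) : MP) + p i :=
    Finset.sup_congr rfl (fun i _ => by rw [hd i, mneg_coe])
  constructor
  · -- lower bound for every real x
    intro x
    have hne : (Finset.univ.sup fun i => mpMulVec B (fun j => ((x j : ℝ) : MP)) i +
        ((-q i : ℝ) : MP)) ≠ ⊥ := by
      obtain ⟨i2, hi2⟩ := hB j0
      refine supNeBot _ _ (Finset.mem_univ i2) ?_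
      intro h
      rcases WithBot.add_eq_bot.mp h with h | h
      · have hle : B i2 j0 + ((x j0 : ℝ) : MP) ≤ ⊥ :=
          h ▸ Finset.le_sup (f := fun j => B i2 j + ((x j : ℝ) : MP)) (Finset.mem_univ j0)
        rcases WithBot.add_eq_bot.mp (le_bot_iff.mp hle) with h' | h'
        · exact hi2 h'
        · exact WithBot.coe_ne_bot h'
      · exact WithBot.coe_ne_bot h
    obtain ⟨s, hs⟩ := neBotCoe _ hne
    -- key: x j ≤ s + c j
    have key : ∀ j, x j ≤ s + -(S j) := by
      intro j
      have h2 : (Finset.univ.sup fun i => ((-q i : ℝ) : MP) + B i j) ≤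
          ((s - x j : ℝ) : MP) := by
        refine Finset.sup_le fun i _ => ?_
        rcases botOrCoe (B i j) with hb | ⟨b, hb⟩
        · rw [hb]; simp
        · have h3 : (B i j + ((x j : ℝ) : MP)) + ((-q i : ℝ) : MP) ≤ ((s : ℝ) : MP) := by
            rw [← hs]
            refine le_trans (add_le_add_left ?_ _) (Finset.le_sup
              (f := fun i' => mpMulVec B (fun j' => ((x j' : ℝ) : MP)) i' +
                ((-q i' : ℝ) : MP)) (Finset.mem_univ i))
            exact Finset.le_sup (f := fun j' => B i j' + ((x j' : ℝ) : MP))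
              (Finset.mem_univ j)
          rw [hb, ← WithBot.coe_add, ← WithBot.coe_add] at h3
          have := WithBot.coe_le_coe.mp h3
          rw [hb, ← WithBot.coe_add]
          exact WithBot.coe_le_coe.mpr (by linarith)
      rw [hS j] at h2
      have := WithBot.coe_le_coe.mp h2
      linarith
    -- A ⊗ x is real
    have hex : ∀ i, ∃ ei : ℝ, mpMulVec A (fun j => ((x j : ℝ) : MP)) i = ((ei : ℝ) : MP) := by
      intro i
      obtain ⟨j, hj⟩ := hA i
      refine neBotCoe _ (supNeBot _ _ (Finset.mem_univ j) ?_)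
      intro h
      rcases WithBot.add_eq_bot.mp h with h | h
      · exact hj h
      · exact WithBot.coe_ne_bot h
    choose e he using hex
    have hebound : ∀ i, e i ≤ s + d i := by
      intro i
      have h4 : mpMulVec A (fun j => ((x j : ℝ) : MP)) i ≤ ((s + d i : ℝ) : MP) := by
        rw [mpMulVec]
        refine Finset.sup_le fun j _ => ?_
        have h5 : A i j + ((x j : ℝ) : MP) ≤ ((s : ℝ) : MP) + (A i j + cvec B q j) := by
          have hxle : ((x j : ℝ) : MP) ≤ ((s : ℝ) : MP) + cvec B q j := by
            rw [hcvec j, ← WithBot.coe_add]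
            exact WithBot.coe_le_coe.mpr (key j)
          calc A i j + ((x j : ℝ) : MP) ≤ A i j + (((s : ℝ) : MP) + cvec B q j) :=
                add_le_add_right hxle _
            _ = ((s : ℝ) : MP) + (A i j + cvec B q j) := by ac_rfl
        refine h5.trans ?_
        have h6 : A i j + cvec B q j ≤ ((d i : ℝ) : MP) :=
          (hd i) ▸ Finset.le_sup (f := fun j' => A i j' + cvec B q j') (Finset.mem_univ j)
        calc ((s : ℝ) : MP) + (A i j + cvec B q j) ≤ ((s : ℝ) : MP) + ((d i : ℝ) : MP) :=
              add_le_add_right h6 _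
          _ = ((s + d i : ℝ) : MP) := by rw [← WithBot.coe_add]
      rw [he i] at h4
      exact WithBot.coe_le_coe.mp h4
    have hF2 : ((-s : ℝ) : MP) +
        (Finset.univ.sup fun i => mneg (mpMulVec A (cvec B q) i) + p i) ≤
        Finset.univ.sup fun i => mneg (mpMulVec A (fun j => ((x j : ℝ) : MP)) i) + p i := by
      rw [hDel2, coe_add_sup]
      refine Finset.sup_le fun i _ => ?_
      refine le_trans ?_ (Finset.le_sup (Finset.mem_univ i))
      rw [he i, mneg_coe, ← add_assoc, ← WithBot.coe_add]
      exact add_le_add_left (WithBot.coe_le_coe.mpr (by have := hebound i; linarith)) _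
    calc (Finset.univ.sup fun i => mneg (mpMulVec A (cvec B q) i) + p i)
        = ((s : ℝ) : MP) + (((-s : ℝ) : MP) +
          (Finset.univ.sup fun i => mneg (mpMulVec A (cvec B q) i) + p i)) := by
          rw [← add_assoc, ← WithBot.coe_add, add_neg_cancel, WithBot.coe_zero, zero_add]
      _ ≤ ((s : ℝ) : MP) +
          (Finset.univ.sup fun i => mneg (mpMulVec A (fun j => ((x j : ℝ) : MP)) i) + p i) :=
          add_le_add_right hF2 _
      _ = obj A B p q fun j => ((x j : ℝ) : MP) := by rw [obj, hs]
  · -- attainment at x = α + c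
    intro α
    have hAx : ∀ i, mpMulVec A (fun j => ((α : ℝ) : MP) + cvec B q j) i =
        ((α + d i : ℝ) : MP) := by
      intro i
      rw [mpMulVec]
      have hterm : ∀ j, A i j + (((α : ℝ) : MP) + cvec B q j) =
          ((α : ℝ) : MP) + (A i j + cvec B q j) := fun j => by ac_rfl
      rw [Finset.sup_congr rfl (fun j _ => hterm j), ← coe_add_sup, ← mpMulVec, hd i,
        ← WithBot.coe_add]
    have hF1 : (Finset.univ.sup fun i =>
        mpMulVec B (fun j => ((α : ℝ) : MP) + cvec B q j) i + ((-q i : ℝ) : MP)) =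
        ((α : ℝ) : MP) := by
      apply le_antisymm
      · refine Finset.sup_le fun i _ => ?_
        rw [mpMulVec, add_comm, coe_add_sup]
        refine Finset.sup_le fun j _ => ?_
        have h6 := add_le_add_right (K1 i j) (((α : ℝ) : MP) + ((-q i : ℝ) : MP))
        calc ((-q i : ℝ) : MP) + (B i j + (((α : ℝ) : MP) + cvec B q j))
            = (((α : ℝ) : MP) + ((-q i : ℝ) : MP)) + (B i j + cvec B q j) := by ac_rfl
          _ ≤ (((α : ℝ) : MP) + ((-q i : ℝ) : MP)) + ((q i : ℝ) : MP) := h6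
          _ = ((α : ℝ) : MP) := by
              rw [add_assoc, ← WithBot.coe_add, ← WithBot.coe_add]
              norm_num
      · obtain ⟨i1, hi1⟩ := K2 j0
        refine le_trans ?_ (Finset.le_sup (Finset.mem_univ i1))
        refine le_trans ?_ (add_le_add_left (Finset.le_sup
          (f := fun j => B i1 j + (((α : ℝ) : MP) + cvec B q j)) (Finset.mem_univ j0)) _)
        have heq : (B i1 j0 + (((α : ℝ) : MP) + cvec B q j0)) + ((-q i1 : ℝ) : MP) =
            ((α : ℝ) : MP) := by
          calc (B i1 j0 + (((α : ℝ) : MP) + cvec B q j0)) + ((-q i1 : ℝ) : MP)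
              = (((α : ℝ) : MP) + ((-q i1 : ℝ) : MP)) + (B i1 j0 + cvec B q j0) := by ac_rfl
            _ = (((α : ℝ) : MP) + ((-q i1 : ℝ) : MP)) + ((q i1 : ℝ) : MP) := by rw [hi1]
            _ = ((α : ℝ) : MP) := by
                rw [add_assoc, ← WithBot.coe_add, ← WithBot.coe_add]
                norm_num
        rw [heq]
    have hF2 : (Finset.univ.sup fun i =>
        mneg (mpMulVec A (fun j => ((α : ℝ) : MP) + cvec B q j) i) + p i) =
        ((-α : ℝ) : MP) +
        (Finset.univ.sup fun i => mneg (mpMulVec A (cvec B q) i) + p i) := by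
      rw [hDel2, coe_add_sup]
      refine Finset.sup_congr rfl fun i _ => ?_
      rw [hAx i, mneg_coe, show (-(α + d i)) = -α + -(d i) by ring, WithBot.coe_add, add_assoc]
    rw [obj, hF1, hF2, ← add_assoc, ← WithBot.coe_add, add_neg_cancel, WithBot.coe_zero,
      zero_add]
end
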